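/- Let p : ℝ^d → ℝ^m be a polynomial map with p(0) = 0 and let p* : ℝ[x₁,…,x_m] → ℝ[x₁,…,x_d] be the algebra homomorphism q ↦ q∘p. Then M_p maps Im(φ_m) into Im(φ_d) and satisfies M_p ∘ φ_m = φ_d ∘ p*; moreover, the restriction of M_p to Im(φ_m) is the unique such algebra homomorphism: any algebra homomorphism N : Im(φ_m) → Im(φ_d) (for the shuffle products) with N ∘ φ_m = φ_d ∘ p* coincides with M_p on Im(φ_m). -/

import Mathlib

noncomputable section

open MeasureTheory

/-- Words in the alphabet `{1,…,d}`. -/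
abbrev Word (d : ℕ) := List (Fin d)

/-- `T(ℝ^d)`: the real vector space with basis the words in `{1,…,d}`. -/
abbrev Tens (d : ℕ) := Word d →₀ ℝ

namespace SigPaper

variable {d m s : ℕ}

/-- The basis word `w` as an element of `T(ℝ^d)`. -/
def wordT (w : Word d) : Tens d := Finsupp.single w 1

/-- The shuffle product of two words. -/
def shuffleWord : Word d → Word d → Tens d
  | [], v => Finsupp.single v 1
  | u, [] => Finsupp.single u 1
  | a :: u, b :: v =>
      Finsupp.mapDomain (fun w => a :: w) (shuffleWord u (b :: v)) +
      Finsupp.mapDomain (fun w => b :: w) (shuffleWord (a :: u) v)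
  termination_by u v => u.length + v.length
  decreasing_by all_goals simp +arith +decide

/-- The shuffle product `⧢` on `T(ℝ^d)`, the bilinear extension of the shuffle of words. -/
def shuffle (x y : Tens d) : Tens d :=
  x.sum fun u a => y.sum fun v b => (a * b) • shuffleWord u v

/-- The operator appending the letter `i` at the end of every word (`T_i^+`). -/
def appendLetter (i : Fin d) (x : Tens d) : Tens d :=
  Finsupp.mapDomain (fun w => w ++ [i]) x

/-- The right half-shuffle of two words: `w ≻ (v∘i) = (w ⧢ v)∘i` (zero if the right word
is empty). -/
def halfShuffleWord (u v : Word d) : Tens d :=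
  match v.getLast? with
  | none => 0
  | some i => appendLetter i (shuffleWord u v.dropLast)

/-- The right half-shuffle `≻`, extended bilinearly. -/
def halfShuffle (x y : Tens d) : Tens d :=
  x.sum fun u a => y.sum fun v b => (a * b) • halfShuffleWord u v

/-- The letter-appending operator `T_i^+`. -/
def Tplus (i : Fin d) : Tens d → Tens d := appendLetter i

/-- `T_i^-` on a word: removes the last letter if it equals `i`, otherwise `0`. -/
def TminusWord (i : Fin d) (w : Word d) : Tens d :=
  match w.getLast? with
  | none => 0
  | some j => if j = i then Finsupp.single w.dropLast 1 else 0

/-- The letter-removing operator `T_i^-`. -/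
def Tminus (i : Fin d) (x : Tens d) : Tens d := x.sum fun w a => a • TminusWord i w

/-- The single-letter word `i` in `T(ℝ^d)`. -/
def letterT (i : Fin d) : Tens d := Finsupp.single [i] 1

/-- Shuffle powers `x^{⧢ n}`. -/
def shufflePow (x : Tens d) : ℕ → Tens d
  | 0 => Finsupp.single [] 1
  | n + 1 => shuffle (shufflePow x n) x

/-- Shuffle product of a list of elements. -/
def shuffleList : List (Tens d) → Tens d
  | [] => Finsupp.single [] 1
  | x :: xs => shuffle x (shuffleList xs)

/-- Image of the monomial `x^t` under `φ_d`: the shuffle product of its letters. -/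
def phiMon (t : Fin d →₀ ℕ) : Tens d :=
  shuffleList ((List.finRange d).map fun i => shufflePow (letterT i) (t i))

/-- The embedding `φ_d : ℝ[x₁,…,x_d] → (T(ℝ^d), ⧢)` sending the monomial
`x_{i₁}⋯x_{i_l}` to `i₁ ⧢ ⋯ ⧢ i_l`. -/
def phi (f : MvPolynomial (Fin d) ℝ) : Tens d :=
  f.support.sum fun t => f.coeff t • phiMon t

/-- A polynomial map `p : ℝ^d → ℝ^m`, given by `m` polynomials in `d` variables. -/
abbrev PolyMap (d m : ℕ) := Fin m → MvPolynomial (Fin d) ℝ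

/-- `k_p^{ij} = φ_d(∂p_i/∂x_j) ∈ T(ℝ^d)`. -/
def kP (p : PolyMap d m) (i : Fin m) (j : Fin d) : Tens d :=
  phi (MvPolynomial.pderiv j (p i))

/-- Auxiliary: `M_p` on reversed words, so that `M_p(e) = e` and
`M_p(w∘i) = Σ_j (M_p(w) ⧢ k_p^{ij})∘j`. -/
def MpRev (p : PolyMap d m) : List (Fin m) → Tens d
  | [] => Finsupp.single [] 1
  | i :: w => ∑ j : Fin d, appendLetter j (shuffle (MpRev p w) (kP p i j))

/-- `M_p` on a word. -/
def MpWord (p : PolyMap d m) (w : Word m) : Tens d := MpRev p w.reverse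

/-- The linear map `M_p : T(ℝ^m) → T(ℝ^d)`. -/
def Mp (p : PolyMap d m) (x : Tens m) : Tens d := x.sum fun w a => a • MpWord p w

/-- `X : [0,L] → ℝ^d` is piecewise continuously differentiable: there is a partition
`0 = t₀ ≤ t₁ ≤ ⋯ ≤ t_n = L` such that `X` is `C¹` on each subinterval. -/
def PiecewiseC1 (X : ℝ → Fin d → ℝ) (L : ℝ) : Prop :=
  ∃ (n : ℕ) (t : Fin (n + 1) → ℝ), Monotone t ∧ t 0 = 0 ∧ t (Fin.last n) = L ∧
    ∀ k : Fin n, ContDiffOn ℝ 1 X (Set.Icc (t k.castSucc) (t k.succ))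

/-- Iterated-integral signature coefficients, on reversed words:
`⟨σ(X|_{[0,t]}), w∘i⟩ = ∫_0^t ⟨σ(X|_{[0,r]}), w⟩ Ẋ^i_r dr`. -/
def sigRev (X : ℝ → Fin d → ℝ) : List (Fin d) → ℝ → ℝ
  | [], _ => 1
  | i :: w, t => ∫ r in (0:ℝ)..t, sigRev X w r * deriv (fun u => X u i) r

/-- `⟨σ(X|_{[0,L]}), w⟩`, the signature coefficient of the word `w`. -/
def sigWord (X : ℝ → Fin d → ℝ) (L : ℝ) (w : Word d) : ℝ := sigRev X w.reverse L

/-- The pairing `⟨σ(X|_{[0,L]}), x⟩` for `x ∈ T(ℝ^d)`. -/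
def sigT (X : ℝ → Fin d → ℝ) (L : ℝ) (x : Tens d) : ℝ :=
  x.sum fun w a => a * sigWord X L w

/-- The transformed path `p(X) : t ↦ p(X(t))`. -/
def pPath (p : PolyMap d m) (X : ℝ → Fin d → ℝ) : ℝ → Fin m → ℝ :=
  fun t i => MvPolynomial.eval (X t) (p i)

/-- The translated polynomial map `p̃(y) = p(y + x₀) − p(x₀)`, satisfying `p̃(0) = 0`. -/
def ptilde (p : PolyMap d m) (x0 : Fin d → ℝ) : PolyMap d m := fun i =>
  MvPolynomial.aeval (fun j => MvPolynomial.X j + MvPolynomial.C (x0 j)) (p i) -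
    MvPolynomial.C (MvPolynomial.eval x0 (p i))

/-- The pairing `⟨exp_∘(L·𝟙), x⟩` for `x ∈ T(ℝ¹)`: the coefficient of the word of
length `n` in `exp_∘(L·𝟙)` is `Lⁿ/n!`. -/
def expPair (L : ℝ) (x : Tens 1) : ℝ :=
  x.sum fun w a => a * (L ^ w.length / (w.length.factorial : ℝ))

/-- The pairing `⟨σ(X) ∘ σ(Y), x⟩` of the concatenation product of two signatures with
`x ∈ T(ℝ^d)`: on a word `w` it is `Σ_{u∘v = w} ⟨σ(X), u⟩·⟨σ(Y), v⟩`. -/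
def concatPair (X Y : ℝ → Fin d → ℝ) (L : ℝ) (x : Tens d) : ℝ :=
  x.sum fun w a =>
    a * ∑ k ∈ Finset.range (w.length + 1), sigWord X L (w.take k) * sigWord Y L (w.drop k)

end SigPaper

/-!
Removing the last letter `j` of every word (`T_j^-`) is a derivation of the shuffle product, and
`x = ⟨x, e⟩ e + Σ_j (T_j^- x)∘j` for every `x`. Since `T_j^- ∘ φ_d = φ_d ∘ ∂_j`, this gives
`φ_d f = f(0) e + Σ_j φ_d(∂_j f)∘j`. Feeding it into the recursion defining `M_p` and using that
`φ_d` is a shuffle homomorphism, induction on the degree of `f` yields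
`M_p(φ_m f) = f(0) e + Σ_j φ_d(Σ_i p*(∂_i f) · ∂_j p_i)∘j`, which is `φ_d(p* f)` by the chain rule
and `p(0) = 0`. Uniqueness is then immediate, since `N ∘ φ_m = φ_d ∘ p* = M_p ∘ φ_m`.
-/

namespace MvPolynomial

variable {σ τ R : Type*} [CommSemiring R]

theorem totalDegree_pderiv_lt {i : σ} {f : MvPolynomial σ R} (h : pderiv i f ≠ 0) :
    (pderiv i f).totalDegree < f.totalDegree := by
  obtain ⟨s, hs, hdeg⟩ :=
    Finset.exists_mem_eq_sup _ (support_nonempty.2 h) fun s => s.sum fun _ e => e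
  have hcoeff : coeff (s + Finsupp.single i 1) f ≠ 0 := by
    rw [mem_support_iff, coeff_pderiv] at hs
    exact left_ne_zero_of_mul hs
  have hle := le_totalDegree (mem_support_iff.2 hcoeff)
  rw [Finsupp.sum_add_index' (fun _ => rfl) fun _ _ _ => rfl, Finsupp.sum_single_index rfl]
    at hle
  rw [totalDegree, hdeg]
  omega

theorem constantCoeff_bind₁ {g : σ → MvPolynomial τ R} (hg : ∀ i, constantCoeff (g i) = 0)
    (f : MvPolynomial σ R) : constantCoeff (bind₁ g f) = constantCoeff f := by
  induction f using MvPolynomial.induction_on <;> simp [*]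

theorem pderiv_bind₁ [Fintype σ] (g : σ → MvPolynomial τ R)
    (f : MvPolynomial σ R) (j : τ) :
    pderiv j (bind₁ g f) = ∑ i, bind₁ g (pderiv i f) * pderiv j (g i) := by
  classical
  induction f using MvPolynomial.induction_on with
  | C a => simp
  | add f f' hf hf' => simp [hf, hf', add_mul, Finset.sum_add_distrib]
  | mul_X f k hf =>
    simp [Derivation.leibniz, pderiv_X, Pi.single_apply, hf, add_mul, Finset.sum_add_distrib,
      Finset.mul_sum, apply_ite, mul_assoc]

end MvPolynomial

namespace SigPaper

open MvPolynomial

variable {d m : ℕ}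

section Shuffle

def shuffleBilin : Tens d →ₗ[ℝ] Tens d →ₗ[ℝ] Tens d :=
  Finsupp.linearCombination ℝ fun u => Finsupp.linearCombination ℝ (shuffleWord u)

theorem shuffle_eq_shuffleBilin (x y : Tens d) : shuffle x y = shuffleBilin x y := by
  simp [shuffle, shuffleBilin, Finsupp.linearCombination_apply, Finsupp.sum, Finset.smul_sum,
    mul_smul, LinearMap.sum_apply]

@[simp] theorem add_shuffle (x x' y : Tens d) :
    shuffle (x + x') y = shuffle x y + shuffle x' y := by
  simp [shuffle_eq_shuffleBilin]

@[simp] theorem shuffle_add (x y y' : Tens d) :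
    shuffle x (y + y') = shuffle x y + shuffle x y' := by
  simp [shuffle_eq_shuffleBilin]

@[simp] theorem smul_shuffle (c : ℝ) (x y : Tens d) :
    shuffle (c • x) y = c • shuffle x y := by
  simp [shuffle_eq_shuffleBilin]

@[simp] theorem shuffle_smul (c : ℝ) (x y : Tens d) :
    shuffle x (c • y) = c • shuffle x y := by
  simp [shuffle_eq_shuffleBilin]

@[simp] theorem zero_shuffle (y : Tens d) : shuffle 0 y = 0 := by
  simp [shuffle_eq_shuffleBilin]

@[simp] theorem shuffle_zero (x : Tens d) : shuffle x 0 = 0 := by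
  simp [shuffle_eq_shuffleBilin]

theorem single_shuffle_single (u v : Word d) (a b : ℝ) :
    shuffle (Finsupp.single u a) (Finsupp.single v b) = (a * b) • shuffleWord u v := by
  simp [shuffle]

def prependLetter (a : Fin d) : Tens d →ₗ[ℝ] Tens d :=
  Finsupp.lmapDomain ℝ ℝ (fun w => a :: w)

theorem prependLetter_single (a : Fin d) (w : Word d) (c : ℝ) :
    prependLetter a (Finsupp.single w c) = Finsupp.single (a :: w) c :=
  Finsupp.mapDomain_single

theorem shuffleWord_nil_left (v : Word d) : shuffleWord [] v = Finsupp.single v 1 := by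
  rw [shuffleWord]

theorem shuffleWord_nil_right (u : Word d) : shuffleWord u [] = Finsupp.single u 1 := by
  cases u <;> simp [shuffleWord]

theorem shuffleWord_cons_cons (a b : Fin d) (u v : Word d) :
    shuffleWord (a :: u) (b :: v) =
      prependLetter a (shuffleWord u (b :: v)) + prependLetter b (shuffleWord (a :: u) v) := by
  rw [shuffleWord]; rfl

theorem single_nil_shuffle (x : Tens d) : shuffle (Finsupp.single [] 1) x = x := by
  induction x using Finsupp.induction_linear with
  | zero => simp
  | add x x' hx hx' => simp [hx, hx']
  | single v b => simp [single_shuffle_single, shuffleWord_nil_left]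

theorem shuffleWord_comm (u v : Word d) : shuffleWord u v = shuffleWord v u := by
  induction u, v using shuffleWord.induct with
  | case1 v => rw [shuffleWord_nil_left, shuffleWord_nil_right]
  | case2 u _ => rw [shuffleWord_nil_left, shuffleWord_nil_right]
  | case3 a u b v ih ih' => rw [shuffleWord_cons_cons, shuffleWord_cons_cons, ih, ih', add_comm]

theorem shuffle_comm (x y : Tens d) : shuffle x y = shuffle y x := by
  induction x using Finsupp.induction_linear with
  | zero => simp
  | add x x' hx hx' => simp [hx, hx']
  | single u a =>
    induction y using Finsupp.induction_linear with
    | zero => simp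
    | add y y' hy hy' => simp [hy, hy']
    | single v b => rw [single_shuffle_single, single_shuffle_single, shuffleWord_comm, mul_comm]

theorem shuffle_single_nil (x : Tens d) : shuffle x (Finsupp.single [] 1) = x := by
  rw [shuffle_comm, single_nil_shuffle]

theorem prependLetter_shuffle_prependLetter (a b : Fin d) (x y : Tens d) :
    shuffle (prependLetter a x) (prependLetter b y) =
      prependLetter a (shuffle x (prependLetter b y)) +
        prependLetter b (shuffle (prependLetter a x) y) := by
  induction x using Finsupp.induction_linear with
  | zero => simp
  | add x x' hx hx' => simp only [map_add, add_shuffle, hx, hx']; abel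
  | single u c =>
    induction y using Finsupp.induction_linear with
    | zero => simp
    | add y y' hy hy' => simp only [map_add, shuffle_add, hy, hy']; abel
    | single v e =>
      simp only [prependLetter_single, single_shuffle_single, shuffleWord_cons_cons, smul_add,
        map_smul]

theorem shuffleWord_shuffle_single (u v w : Word d) :
    shuffle (shuffleWord u v) (Finsupp.single w 1) =
      shuffle (Finsupp.single u 1) (shuffleWord v w) :=
  match u, v, w with
  | [], v, w => by
    rw [shuffleWord_nil_left, single_nil_shuffle, single_shuffle_single, one_mul, one_smul]
  | a :: u, [], w => by rw [shuffleWord_nil_right, shuffleWord_nil_left]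
  | a :: u, b :: v, [] => by
    rw [shuffle_single_nil, shuffleWord_nil_right, single_shuffle_single, one_mul, one_smul]
  | a :: u, b :: v, c :: w => by
    have h₁ := shuffleWord_shuffle_single u (b :: v) (c :: w)
    have h₂ := shuffleWord_shuffle_single (a :: u) v (c :: w)
    have h₃ := shuffleWord_shuffle_single (a :: u) (b :: v) w
    rw [shuffleWord_cons_cons a b, add_shuffle, ← prependLetter_single c w,
      prependLetter_shuffle_prependLetter a c, prependLetter_shuffle_prependLetter b c,
      prependLetter_single c w, h₁, h₂, add_add_add_comm, ← map_add, ← add_shuffle,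
      ← shuffleWord_cons_cons a b, h₃, shuffleWord_cons_cons b c]
    simp only [shuffle_add, map_add]
    rw [← prependLetter_single a u, prependLetter_shuffle_prependLetter a b,
      prependLetter_shuffle_prependLetter a c]
    abel
termination_by u.length + v.length + w.length

theorem shuffle_assoc (x y z : Tens d) : shuffle (shuffle x y) z = shuffle x (shuffle y z) := by
  induction x using Finsupp.induction_linear with
  | zero => simp
  | add x x' hx hx' => simp [hx, hx']
  | single u a =>
    induction y using Finsupp.induction_linear with
    | zero => simp
    | add y y' hy hy' => simp [hy, hy']
    | single v b =>
      induction z using Finsupp.induction_linear with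
      | zero => simp
      | add z z' hz hz' => simp [hz, hz']
      | single w c =>
        rw [← Finsupp.smul_single_one u a, ← Finsupp.smul_single_one w c]
        simp only [single_shuffle_single, smul_shuffle, shuffle_smul, shuffleWord_shuffle_single,
          smul_smul]
        ring_nf

end Shuffle

section Tminus

theorem Tminus_single (j : Fin d) (w : Word d) (a : ℝ) :
    Tminus j (Finsupp.single w a) = a • TminusWord j w :=
  Finsupp.linearCombination_single ℝ a w

theorem Tminus_add (j : Fin d) (x y : Tens d) : Tminus j (x + y) = Tminus j x + Tminus j y :=
  map_add (Finsupp.linearCombination ℝ (TminusWord j)) x y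

theorem Tminus_smul (j : Fin d) (c : ℝ) (x : Tens d) : Tminus j (c • x) = c • Tminus j x :=
  map_smul (Finsupp.linearCombination ℝ (TminusWord j)) c x

theorem Tminus_zero (j : Fin d) : Tminus j (0 : Tens d) = 0 :=
  map_zero (Finsupp.linearCombination ℝ (TminusWord j))

theorem TminusWord_nil (j : Fin d) : TminusWord j ([] : Word d) = 0 := rfl

theorem TminusWord_append_singleton (j c : Fin d) (u : Word d) :
    TminusWord j (u ++ [c]) = if c = j then Finsupp.single u 1 else 0 := by
  simp [TminusWord]

theorem TminusWord_cons (j a : Fin d) (u : Word d) :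
    TminusWord j (a :: u) = prependLetter a (TminusWord j u) +
      (if u = [] ∧ a = j then (1 : ℝ) else 0) • Finsupp.single [] 1 := by
  rcases List.eq_nil_or_concat u with rfl | ⟨u, c, rfl⟩
  · simp [TminusWord]
  · rw [List.concat_eq_append, ← List.cons_append, TminusWord_append_singleton,
      TminusWord_append_singleton]
    split_ifs <;> simp_all [prependLetter_single]

theorem prependLetter_apply_nil (a : Fin d) (x : Tens d) : prependLetter a x [] = 0 :=
  Finsupp.mapDomain_of_notMem_range _ _ (by simp)

theorem shuffleWord_apply_nil (u v : Word d) :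
    shuffleWord u v [] = if u = [] ∧ v = [] then 1 else 0 := by
  match u, v with
  | [], v => simp [shuffleWord_nil_left, Finsupp.single_apply]
  | a :: u, [] => simp [shuffleWord_nil_right]
  | a :: u, b :: v => simp [shuffleWord_cons_cons, prependLetter_apply_nil]

theorem Tminus_prependLetter (j a : Fin d) (x : Tens d) :
    Tminus j (prependLetter a x) =
      prependLetter a (Tminus j x) + (if a = j then x [] else 0) • Finsupp.single [] 1 := by
  induction x using Finsupp.induction_linear with
  | zero => simp [Tminus_zero]
  | add x x' hx hx' =>
    simp only [map_add, Tminus_add, hx, hx', Finsupp.add_apply]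
    split_ifs <;> simp only [add_smul, zero_smul] <;> abel
  | single w b =>
    rw [prependLetter_single, Tminus_single, Tminus_single, TminusWord_cons, map_smul, smul_add,
      Finsupp.single_apply]
    congr 1
    split_ifs <;> simp_all

theorem Tminus_shuffleWord (j : Fin d) (u v : Word d) :
    Tminus j (shuffleWord u v) =
      shuffle (TminusWord j u) (Finsupp.single v 1) +
        shuffle (Finsupp.single u 1) (TminusWord j v) := by
  induction u, v using shuffleWord.induct with
  | case1 v =>
    rw [shuffleWord_nil_left, Tminus_single, one_smul, TminusWord_nil, zero_shuffle, zero_add,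
      single_nil_shuffle]
  | case2 u _ =>
    rw [shuffleWord_nil_right, Tminus_single, one_smul, TminusWord_nil, shuffle_zero, add_zero,
      shuffle_single_nil]
  | case3 a u b v ih ih' =>
    rw [shuffleWord_cons_cons, Tminus_add, Tminus_prependLetter, Tminus_prependLetter,
      shuffleWord_apply_nil, shuffleWord_apply_nil, ih, ih', TminusWord_cons, TminusWord_cons,
      ← prependLetter_single a u, ← prependLetter_single b v]
    simp only [List.cons_ne_nil, false_and, and_false, if_false, ite_self, zero_smul, add_zero,
      add_shuffle, shuffle_add, smul_shuffle, shuffle_smul, single_nil_shuffle, shuffle_single_nil,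
      prependLetter_shuffle_prependLetter, map_add, map_smul]
    abel

theorem Tminus_shuffle (j : Fin d) (x y : Tens d) :
    Tminus j (shuffle x y) = shuffle (Tminus j x) y + shuffle x (Tminus j y) := by
  induction x using Finsupp.induction_linear with
  | zero => simp [Tminus_zero]
  | add x x' hx hx' => simp only [add_shuffle, Tminus_add, hx, hx']; abel
  | single u a =>
    induction y using Finsupp.induction_linear with
    | zero => simp [Tminus_zero]
    | add y y' hy hy' => simp only [shuffle_add, Tminus_add, hy, hy']; abel
    | single v b =>
      rw [single_shuffle_single, Tminus_smul, Tminus_shuffleWord, Tminus_single, Tminus_single,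
        ← Finsupp.smul_single_one u a, ← Finsupp.smul_single_one v b]
      simp only [smul_shuffle, shuffle_smul, smul_add, smul_smul, mul_comm]

theorem shuffle_apply_nil (x y : Tens d) : shuffle x y [] = x [] * y [] := by
  induction x using Finsupp.induction_linear with
  | zero => simp
  | add x x' hx hx' => simp [hx, hx', add_mul]
  | single u a =>
    induction y using Finsupp.induction_linear with
    | zero => simp
    | add y y' hy hy' => simp [hy, hy', mul_add]
    | single v b =>
      simp only [single_shuffle_single, Finsupp.smul_apply, shuffleWord_apply_nil,
        Finsupp.single_apply, smul_eq_mul]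
      split_ifs <;> simp_all

theorem appendLetter_add (i : Fin d) (x y : Tens d) :
    appendLetter i (x + y) = appendLetter i x + appendLetter i y :=
  Finsupp.mapDomain_add

theorem appendLetter_smul (i : Fin d) (c : ℝ) (x : Tens d) :
    appendLetter i (c • x) = c • appendLetter i x :=
  Finsupp.mapDomain_smul c x

theorem appendLetter_sum {ι : Type*} (i : Fin d) (s : Finset ι) (f : ι → Tens d) :
    appendLetter i (∑ k ∈ s, f k) = ∑ k ∈ s, appendLetter i (f k) :=
  map_sum (Finsupp.lmapDomain ℝ ℝ (· ++ [i])) f s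

theorem appendLetter_single (i : Fin d) (w : Word d) (a : ℝ) :
    appendLetter i (Finsupp.single w a) = Finsupp.single (w ++ [i]) a :=
  Finsupp.mapDomain_single

theorem smul_single_nil_add_sum_appendLetter_Tminus (x : Tens d) :
    x [] • Finsupp.single [] 1 + ∑ j, appendLetter j (Tminus j x) = x := by
  induction x using Finsupp.induction_linear with
  | zero => simp [Tminus_zero, appendLetter]
  | add x x' hx hx' =>
    simp only [Tminus_add, appendLetter_add, Finset.sum_add_distrib, Finsupp.add_apply, add_smul]
    rw [add_add_add_comm, hx, hx']
  | single w a =>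
    rcases List.eq_nil_or_concat w with rfl | ⟨u, c, rfl⟩
    · simp [Tminus_single, TminusWord_nil, appendLetter]
    · simp [Tminus_single, TminusWord_append_singleton, apply_ite, appendLetter]

end Tminus

section Phi

theorem shufflePow_add (x : Tens d) (n k : ℕ) :
    shufflePow x (n + k) = shuffle (shufflePow x n) (shufflePow x k) := by
  induction k with
  | zero => rw [Nat.add_zero, shufflePow, shuffle_single_nil]
  | succ k ih => rw [← Nat.add_assoc, shufflePow, shufflePow, ih, shuffle_assoc]

theorem shuffleList_map_shuffle {ι : Type*} (f g : ι → Tens d) (l : List ι) :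
    shuffleList (l.map fun i => shuffle (f i) (g i)) =
      shuffle (shuffleList (l.map f)) (shuffleList (l.map g)) := by
  induction l with
  | nil => simp [shuffleList, shuffle_single_nil]
  | cons a l ih =>
    simp only [List.map_cons, shuffleList, ih, shuffle_assoc]
    rw [← shuffle_assoc (g a), shuffle_comm (g a), shuffle_assoc]

theorem shuffleList_map_eq_single_nil {ι : Type*} (g : ι → Tens d) (l : List ι)
    (h : ∀ k ∈ l, g k = Finsupp.single [] 1) : shuffleList (l.map g) = Finsupp.single [] 1 := by
  induction l with
  | nil => rfl
  | cons a l ih =>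
    rw [List.map_cons, shuffleList, h a List.mem_cons_self, single_nil_shuffle,
      ih fun k hk => h k (List.mem_cons_of_mem a hk)]

theorem shuffleList_map_eq_of_nodup {ι : Type*} (g : ι → Tens d) {l : List ι} (hl : l.Nodup)
    {i : ι} (hi : i ∈ l) (h : ∀ k ∈ l, k ≠ i → g k = Finsupp.single [] 1) :
    shuffleList (l.map g) = g i := by
  induction l with
  | nil => simp at hi
  | cons a l ih =>
    obtain ⟨ha, hl⟩ := List.nodup_cons.mp hl
    rw [List.map_cons, shuffleList]
    rcases List.mem_cons.mp hi with rfl | hi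
    · rw [shuffleList_map_eq_single_nil g l fun k hk => h k (List.mem_cons_of_mem _ hk)
        (ne_of_mem_of_not_mem hk ha), shuffle_single_nil]
    · rw [h a List.mem_cons_self (ne_of_mem_of_not_mem hi ha).symm, single_nil_shuffle,
        ih hl hi fun k hk => h k (List.mem_cons_of_mem a hk)]

theorem phiMon_zero : phiMon (0 : Fin d →₀ ℕ) = Finsupp.single [] 1 :=
  shuffleList_map_eq_single_nil _ _ fun _ _ => rfl

theorem phiMon_add (t s : Fin d →₀ ℕ) : phiMon (t + s) = shuffle (phiMon t) (phiMon s) := by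
  simp only [phiMon, Finsupp.add_apply, shufflePow_add, shuffleList_map_shuffle]

theorem phiMon_single (i : Fin d) : phiMon (Finsupp.single i 1) = letterT i := by
  rw [phiMon, shuffleList_map_eq_of_nodup _ (List.nodup_finRange d) (List.mem_finRange i)
    fun k _ hk => by rw [Finsupp.single_eq_of_ne hk]; rfl]
  rw [Finsupp.single_eq_same, shufflePow, shufflePow, single_nil_shuffle]

def phiLinear : MvPolynomial (Fin d) ℝ →ₗ[ℝ] Tens d :=
  Finsupp.linearCombination ℝ phiMon ∘ₗ (AddMonoidAlgebra.coeffLinearEquiv ℝ).toLinearMap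

theorem phiLinear_apply (f : MvPolynomial (Fin d) ℝ) : phiLinear f = phi f := rfl

theorem phi_add (f g : MvPolynomial (Fin d) ℝ) : phi (f + g) = phi f + phi g :=
  map_add phiLinear f g

theorem phi_zero : phi (0 : MvPolynomial (Fin d) ℝ) = 0 :=
  map_zero phiLinear

theorem phi_sum {ι : Type*} (s : Finset ι) (f : ι → MvPolynomial (Fin d) ℝ) :
    phi (∑ k ∈ s, f k) = ∑ k ∈ s, phi (f k) :=
  map_sum phiLinear f s

theorem phi_monomial (t : Fin d →₀ ℕ) (a : ℝ) :
    phi (monomial t a) = a • phiMon t := by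
  simp [← phiLinear_apply, phiLinear, ← single_eq_monomial]

theorem phi_mul (f g : MvPolynomial (Fin d) ℝ) : phi (f * g) = shuffle (phi f) (phi g) := by
  induction f using MvPolynomial.induction_on' with
  | add f f' hf hf' => rw [add_mul, phi_add, phi_add, hf, hf', add_shuffle]
  | monomial t a =>
    induction g using MvPolynomial.induction_on' with
    | add g g' hg hg' => rw [mul_add, phi_add, phi_add, hg, hg', shuffle_add]
    | monomial s b =>
      rw [monomial_mul, phi_monomial, phi_monomial, phi_monomial, phiMon_add,
        smul_shuffle, shuffle_smul, smul_smul]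

theorem phi_C (a : ℝ) :
    phi (C a : MvPolynomial (Fin d) ℝ) = a • Finsupp.single [] 1 := by
  rw [← monomial_zero', phi_monomial, phiMon_zero]

theorem phi_X (i : Fin d) : phi (X i : MvPolynomial (Fin d) ℝ) = letterT i := by
  rw [X, phi_monomial, phiMon_single, one_smul]

theorem Tminus_letterT (j i : Fin d) :
    Tminus j (letterT i) = if i = j then Finsupp.single [] 1 else 0 := by
  rw [letterT, Tminus_single, ← List.nil_append [i], TminusWord_append_singleton, one_smul]

theorem Tminus_phi (j : Fin d) (f : MvPolynomial (Fin d) ℝ) :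
    Tminus j (phi f) = phi (pderiv j f) := by
  induction f using MvPolynomial.induction_on with
  | C a =>
    rw [phi_C, Tminus_smul, Tminus_single, TminusWord_nil, pderiv_C, phi_zero,
      smul_zero, smul_zero]
  | add f g hf hg => rw [phi_add, Tminus_add, hf, hg, map_add, phi_add]
  | mul_X f i hf =>
    rw [phi_mul, Tminus_shuffle, hf, phi_X, Tminus_letterT, Derivation.leibniz, smul_eq_mul,
      smul_eq_mul, phi_add, phi_mul, phi_mul, phi_X, shuffle_comm (letterT i), add_comm]
    congr 1
    rw [pderiv_X]
    split_ifs with h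
    · rw [h, Pi.single_eq_same, ← C_1, phi_C, one_smul]
    · rw [Pi.single_eq_of_ne h, phi_zero]

theorem phi_apply_nil (f : MvPolynomial (Fin d) ℝ) :
    phi f [] = constantCoeff f := by
  induction f using MvPolynomial.induction_on with
  | C a => simp [phi_C]
  | add f g hf hg => rw [phi_add, Finsupp.add_apply, hf, hg, map_add]
  | mul_X f i hf => simp [phi_mul, shuffle_apply_nil, phi_X, letterT, hf]

theorem phi_eq_smul_single_nil_add_sum (f : MvPolynomial (Fin d) ℝ) :
    phi f = constantCoeff f • Finsupp.single [] 1 +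
      ∑ j, appendLetter j (phi (pderiv j f)) := by
  simp only [← phi_apply_nil, ← Tminus_phi, smul_single_nil_add_sum_appendLetter_Tminus]

end Phi

section Mp

theorem Mp_single (p : PolyMap d m) (w : Word m) (a : ℝ) :
    Mp p (Finsupp.single w a) = a • MpWord p w :=
  Finsupp.linearCombination_single ℝ a w

theorem Mp_add (p : PolyMap d m) (x y : Tens m) : Mp p (x + y) = Mp p x + Mp p y :=
  map_add (Finsupp.linearCombination ℝ (MpWord p)) x y

theorem Mp_smul (p : PolyMap d m) (c : ℝ) (x : Tens m) : Mp p (c • x) = c • Mp p x :=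
  map_smul (Finsupp.linearCombination ℝ (MpWord p)) c x

theorem Mp_sum {ι : Type*} (p : PolyMap d m) (s : Finset ι) (g : ι → Tens m) :
    Mp p (∑ k ∈ s, g k) = ∑ k ∈ s, Mp p (g k) :=
  map_sum (Finsupp.linearCombination ℝ (MpWord p)) g s

theorem Mp_zero (p : PolyMap d m) : Mp p 0 = 0 :=
  map_zero (Finsupp.linearCombination ℝ (MpWord p))

theorem Mp_appendLetter (p : PolyMap d m) (i : Fin m) (x : Tens m) :
    Mp p (appendLetter i x) = ∑ j, appendLetter j (shuffle (Mp p x) (kP p i j)) := by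
  induction x using Finsupp.induction_linear with
  | zero => simp [appendLetter, Mp_zero]
  | add x y hx hy =>
    simp only [appendLetter_add, Mp_add, hx, hy, add_shuffle, Finset.sum_add_distrib]
  | single w a =>
    have hw : MpWord p (w ++ [i]) = ∑ j, appendLetter j (shuffle (MpWord p w) (kP p i j)) := by
      rw [MpWord, List.reverse_append]; rfl
    simp only [appendLetter_single, Mp_single, hw, Finset.smul_sum, smul_shuffle,
      appendLetter_smul]

theorem Mp_single_nil (p : PolyMap d m) : Mp p (Finsupp.single [] 1) = Finsupp.single [] 1 := by
  rw [Mp_single, one_smul]; rfl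

theorem Mp_phi_of_forall_pderiv (p : PolyMap d m) (hp : ∀ i, constantCoeff (p i) = 0)
    (f : MvPolynomial (Fin m) ℝ)
    (h : ∀ i, Mp p (phi (pderiv i f)) = phi (bind₁ p (pderiv i f))) :
    Mp p (phi f) = phi (bind₁ p f) := by
  have chain : ∀ j, ∑ i, shuffle (phi (bind₁ p (pderiv i f))) (kP p i j) =
      phi (pderiv j (bind₁ p f)) := fun j => by
    simp only [kP, ← phi_mul, ← phi_sum, pderiv_bind₁]
  calc Mp p (phi f)
      = constantCoeff f • Finsupp.single [] 1 +
          ∑ j, appendLetter j (∑ i, shuffle (phi (bind₁ p (pderiv i f))) (kP p i j)) := by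
        rw [phi_eq_smul_single_nil_add_sum f, Mp_add, Mp_smul, Mp_single_nil, Mp_sum]
        simp only [Mp_appendLetter, h, appendLetter_sum]
        rw [Finset.sum_comm]
    _ = constantCoeff (bind₁ p f) • Finsupp.single [] 1 +
          ∑ j, appendLetter j (phi (pderiv j (bind₁ p f))) := by
        simp only [chain, constantCoeff_bind₁ hp]
    _ = phi (bind₁ p f) := (phi_eq_smul_single_nil_add_sum _).symm

theorem Mp_phi (p : PolyMap d m) (hp : ∀ i, constantCoeff (p i) = 0)
    (f : MvPolynomial (Fin m) ℝ) : Mp p (phi f) = phi (bind₁ p f) :=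
  Mp_phi_of_forall_pderiv p hp f fun i => by
    by_cases h0 : pderiv i f = 0
    · rw [h0, phi_zero, Mp_zero, map_zero, phi_zero]
    · exact Mp_phi p hp (pderiv i f)
termination_by f.totalDegree
decreasing_by exact totalDegree_pderiv_lt h0

end Mp

/-- `M_p` maps `Im(φ_m)` into `Im(φ_d)` with `M_p ∘ φ_m = φ_d ∘ p*`, and
its restriction to `Im(φ_m)` is the unique such shuffle-algebra homomorphism. -/
theorem Mp_unique_on_image (d m : ℕ) (p : PolyMap d m)
    (hp : ∀ i, MvPolynomial.eval (0 : Fin d → ℝ) (p i) = 0) :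
    (∀ f : MvPolynomial (Fin m) ℝ, Mp p (phi f) = phi (MvPolynomial.bind₁ p f)) ∧
    (∀ N : Tens m →ₗ[ℝ] Tens d,
        (∀ x y : Tens m, x ∈ Set.range (phi (d := m)) → y ∈ Set.range (phi (d := m)) →
            N (shuffle x y) = shuffle (N x) (N y)) →
        (∀ f : MvPolynomial (Fin m) ℝ, N (phi f) = phi (MvPolynomial.bind₁ p f)) →
        ∀ x ∈ Set.range (phi (d := m)), N x = Mp p x) := by
  have hMp := Mp_phi p fun i => by rw [← MvPolynomial.eval_zero, hp i]
  refine ⟨hMp, fun N _ hN x ⟨f, hf⟩ => ?_⟩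
  rw [← hf, hN, hMp]

end SigPaper
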